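/- Let G act sharply 2-transitively on Ω and suppose some point stabilizer G_ω contains an involution. Then the set of involutions of G, with G acting by conjugation, is a transitive G-set, and for each ω ∈ Ω the stabilizer G_ω equals the centralizer in G of the unique involution it contains. -/

import Mathlib

def IsSharply2Transitive (G Ω : Type*) [Group G] [MulAction G Ω] : Prop :=
  ∀ x y z w : Ω, x ≠ y → z ≠ w → ∃! g : G, g • x = z ∧ g • y = w

/-!
A nontrivial element of a sharply 2-transitive group fixes at most one point, and two involutions
that agree at a point they move coincide, since both swap that point with its image. Hence if
`g` maps a pair `(x, σ x)` to `(y, τ y)`, then `g σ g⁻¹ = τ`: this makes all involutions conjugate.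
For an involution `σ` fixing `ω`, its centralizer permutes the fixed points of `σ`, so it fixes `ω`;
conversely an element `g` fixing `ω` agrees at `ω` and at some `x ≠ ω` with the element sending
`(x, σ x)` to `(g x, σ (g x))`, which centralizes `σ`.
-/

theorem exists_orderOf_eq_smul_eq_self {G Ω : Type*} [Group G] [MulAction G Ω]
    [MulAction.IsPretransitive G Ω] {σ₀ : G} {ω₀ : Ω} (hσ₀ : σ₀ • ω₀ = ω₀) (ω : Ω) :
    ∃ σ : G, orderOf σ = orderOf σ₀ ∧ σ • ω = ω := by
  obtain ⟨g, rfl⟩ := MulAction.exists_smul_eq G ω₀ ω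
  refine ⟨g * σ₀ * g⁻¹, ?_, ?_⟩
  · rw [← MulAut.conj_apply, MulEquiv.orderOf_eq]
  · rw [mul_smul, mul_smul, inv_smul_smul, hσ₀]

namespace IsSharply2Transitive

variable {G Ω : Type*} [Group G] [MulAction G Ω]

theorem eq_of_smul_eq_smul (h : IsSharply2Transitive G Ω) {g g' : G} {x y : Ω} (hxy : x ≠ y)
    (hx : g • x = g' • x) (hy : g • y = g' • y) : g = g' := by
  obtain ⟨_, -, huniq⟩ := h x y (g • x) (g • y) hxy ((MulAction.injective g).ne hxy)
  rw [huniq g ⟨rfl, rfl⟩, huniq g' ⟨hx.symm, hy.symm⟩]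

theorem eq_of_smul_eq_self (h : IsSharply2Transitive G Ω) {g : G} (hg : g ≠ 1) {x y : Ω}
    (hx : g • x = x) (hy : g • y = y) : x = y := by
  by_contra hxy
  exact hg (h.eq_of_smul_eq_smul hxy (by rwa [one_smul]) (by rwa [one_smul]))

theorem exists_smul_ne [Nontrivial Ω] (h : IsSharply2Transitive G Ω) {g : G} (hg : g ≠ 1) :
    ∃ x : Ω, g • x ≠ x := by
  by_contra! hfix
  obtain ⟨x, y, hxy⟩ := exists_pair_ne Ω
  exact hxy (h.eq_of_smul_eq_self hg (hfix x) (hfix y))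

theorem isPretransitive [Nontrivial Ω] (h : IsSharply2Transitive G Ω) :
    MulAction.IsPretransitive G Ω where
  exists_smul_eq x y := by
    obtain ⟨x', hx'⟩ := exists_ne x
    obtain ⟨y', hy'⟩ := exists_ne y
    obtain ⟨g, ⟨hgx, -⟩, -⟩ := h x x' y y' hx'.symm hy'.symm
    exact ⟨g, hgx⟩

theorem eq_of_sq_eq_one_of_smul_eq (h : IsSharply2Transitive G Ω) {σ τ : G} (hσ : σ ^ 2 = 1)
    (hτ : τ ^ 2 = 1) {x : Ω} (hx : σ • x ≠ x) (hστ : σ • x = τ • x) : σ = τ := by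
  refine h.eq_of_smul_eq_smul hx.symm hστ ?_
  rw [← mul_smul, ← sq, hσ, hστ, ← mul_smul, ← sq, hτ]

theorem conj_eq_of_smul_eq (h : IsSharply2Transitive G Ω) {σ τ g : G} (hσ : σ ^ 2 = 1)
    (hτ : τ ^ 2 = 1) {x y : Ω} (hx : σ • x ≠ x) (hgx : g • x = y) (hgσx : g • σ • x = τ • y) :
    g * σ * g⁻¹ = τ := by
  have hconj : (g * σ * g⁻¹) • y = τ • y := by
    rw [mul_smul, mul_smul, ← hgx, inv_smul_smul, hgσx, hgx]
  refine h.eq_of_sq_eq_one_of_smul_eq (by rw [conj_pow, hσ, mul_one, mul_inv_cancel]) hτ ?_ hconj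
  rw [hconj, ← hgσx, ← hgx]
  exact (MulAction.injective g).ne hx

theorem exists_conj_eq [Nontrivial Ω] (h : IsSharply2Transitive G Ω) {σ τ : G}
    (hσ : orderOf σ = 2) (hτ : orderOf τ = 2) : ∃ g : G, g * σ * g⁻¹ = τ := by
  rw [orderOf_eq_prime_iff] at hσ hτ
  obtain ⟨x, hx⟩ := h.exists_smul_ne hσ.2
  obtain ⟨y, hy⟩ := h.exists_smul_ne hτ.2
  obtain ⟨g, ⟨hgx, hgσx⟩, -⟩ := h x (σ • x) y (τ • y) hx.symm hy.symm
  exact ⟨g, h.conj_eq_of_smul_eq hσ.1 hτ.1 hx hgx hgσx⟩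

theorem smul_eq_self_of_commute (h : IsSharply2Transitive G Ω) {σ g : G} (hσ : σ ≠ 1) {ω : Ω}
    (hσω : σ • ω = ω) (hg : Commute g σ) : g • ω = ω :=
  h.eq_of_smul_eq_self hσ (by rw [← mul_smul, ← hg.eq, mul_smul, hσω]) hσω

theorem commute_of_smul_eq_self [Nontrivial Ω] (h : IsSharply2Transitive G Ω) {σ g : G}
    (hσ : orderOf σ = 2) {ω : Ω} (hσω : σ • ω = ω) (hg : g • ω = ω) : Commute g σ := by
  rw [orderOf_eq_prime_iff] at hσ
  have moves {x : Ω} (hx : x ≠ ω) : σ • x ≠ x := fun hfix =>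
    hx (h.eq_of_smul_eq_self hσ.2 hfix hσω)
  obtain ⟨x, hx⟩ := exists_ne ω
  have hgx : g • x ≠ ω := by
    rw [← hg]
    exact (MulAction.injective g).ne hx
  obtain ⟨c, ⟨hcx, hcσx⟩, -⟩ := h x (σ • x) (g • x) (σ • g • x) (moves hx).symm (moves hgx).symm
  have hcσ : Commute c σ :=
    mul_inv_eq_iff_eq_mul.mp (h.conj_eq_of_smul_eq hσ.1 hσ.1 (moves hx) hcx hcσx)
  have hcg : c = g := by
    refine h.eq_of_smul_eq_smul hx.symm ?_ hcx
    rw [h.smul_eq_self_of_commute hσ.2 hσω hcσ, hg]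
  exact hcg ▸ hcσ

end IsSharply2Transitive

theorem conj_action_on_involutions {G Ω : Type*} [Group G] [MulAction G Ω] [Nontrivial Ω]
    (h : IsSharply2Transitive G Ω)
    (hinv : ∃ (ω : Ω) (σ : G), orderOf σ = 2 ∧ σ • ω = ω) :
    (∀ σ τ : G, orderOf σ = 2 → orderOf τ = 2 → ∃ g : G, g * σ * g⁻¹ = τ) ∧
    (∀ ω : Ω, ∃ σ : G, orderOf σ = 2 ∧ σ • ω = ω ∧
      {g : G | g • ω = ω} = {g : G | g * σ = σ * g}) := by
  refine ⟨fun σ τ hσ hτ => h.exists_conj_eq hσ hτ, fun ω => ?_⟩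
  obtain ⟨ω₀, σ₀, hσ₀, hσ₀ω₀⟩ := hinv
  have := h.isPretransitive
  obtain ⟨σ, hσσ₀, hσω⟩ := exists_orderOf_eq_smul_eq_self hσ₀ω₀ ω
  have hσ : orderOf σ = 2 := hσσ₀.trans hσ₀
  have hσ1 : σ ≠ 1 := (orderOf_eq_prime_iff.mp hσ).2
  exact ⟨σ, hσ, hσω, Set.ext fun g =>
    ⟨h.commute_of_smul_eq_self hσ hσω, h.smul_eq_self_of_commute hσ1 hσω⟩⟩
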